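/- arXiv:2410.22196 — 3 statements merged into one kernel-verified Lean document; each statement's English description precedes it below -/
import Mathlib

section
/- Let b₁,…,bₙ be linearly independent in ℝ^k with Gram–Schmidt vectors b₁*,…,bₙ* and coefficients μ_{i,j} = ⟨bᵢ, bⱼ*⟩/⟨bⱼ*, bⱼ*⟩. Fix i < n and suppose (δ − μ_{i+1,i}²)‖bᵢ*‖² > ‖b_{i+1}*‖² for some real δ. Let B' be the family obtained from B by swapping bᵢ and b_{i+1}. Then S(B') < δ·S(B), where S denotes the product of Gram determinants of all initial segments. -/
open Finset RealInnerProductSpace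

noncomputable section

instance (n : ℕ) : WellFoundedLT (Fin n) := Finite.to_wellFoundedLT

/-- the matrix of the first \`m\` columns -/
def seg (k n : ℕ) (b : Fin n → EuclideanSpace ℝ (Fin k)) (m : ℕ) (hm : m ≤ n) :
    Matrix (Fin k) (Fin m) ℝ :=
  Matrix.of fun r j => b (Fin.castLE hm j) r

/-- the size of a basis: the product of the Gram determinants of all initial segments -/
def S (k n : ℕ) (b : Fin n → EuclideanSpace ℝ (Fin k)) : ℝ :=
  ∏ i : Fin n, ((seg k n b (i + 1) i.isLt).transpose * seg k n b (i + 1) i.isLt).det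

/-!
The Gram determinant of `b₀, …, bⱼ` is `∏_{l ≤ j} ‖b_l*‖²`, because the `b`'s differ from the
Gram–Schmidt vectors by a unitriangular change of basis. Swapping `bᵢ` and `bᵢ₊₁` only permutes the
vectors of every initial segment except the one ending at position `i`, so only that factor of `S`
changes. On it, the first `i` Gram–Schmidt vectors are unchanged and the last one becomes
`b*ᵢ₊₁ + μ b*ᵢ`, of squared norm `‖b*ᵢ₊₁‖² + μ² ‖b*ᵢ‖² < δ ‖b*ᵢ‖²`.
-/

open Matrix InnerProductSpace

section GramSchmidt

variable {𝕜 E ι : Type*} [RCLike 𝕜] [NormedAddCommGroup E] [InnerProductSpace 𝕜 E]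
  [LinearOrder ι] [LocallyFiniteOrderBot ι] [WellFoundedLT ι]

theorem gramSchmidt_congr {f g : ι → E} {j : ι} (h : ∀ l ≤ j, f l = g l) :
    gramSchmidt 𝕜 f j = gramSchmidt 𝕜 g j := by
  induction j using WellFoundedLT.induction with
  | _ j ih =>
    rw [gramSchmidt_def, gramSchmidt_def, h j le_rfl]
    refine congrArg _ (sum_congr rfl fun l hl => ?_)
    have hlj := mem_Iio.1 hl
    rw [ih l hlj fun l' hl' => h l' (hl'.trans hlj.le)]

theorem gramSchmidt_comp_castLE {m n : ℕ} (hm : m ≤ n) (f : Fin n → E) (j : Fin m) :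
    gramSchmidt 𝕜 (f ∘ Fin.castLE hm) j = gramSchmidt 𝕜 f (Fin.castLE hm j) := by
  induction j using WellFoundedLT.induction with
  | _ j ih =>
    rw [gramSchmidt_def, gramSchmidt_def, ← Fin.map_castLEEmb_Iio, sum_map]
    refine congrArg _ (sum_congr rfl fun l hl => ?_)
    rw [ih l (mem_Iio.1 hl)]
    rfl

theorem gramSchmidt_comp_swap_of_lt [DecidableEq ι] (f : ι → E) {i j l : ι} (hi : l < i)
    (hj : l < j) : gramSchmidt 𝕜 (f ∘ Equiv.swap i j) l = gramSchmidt 𝕜 f l :=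
  gramSchmidt_congr fun _ hl' =>
    congrArg f (Equiv.swap_apply_of_ne_of_ne (hl'.trans_lt hi).ne (hl'.trans_lt hj).ne)

theorem gramSchmidt_comp_swap_of_covBy [DecidableEq ι] (f : ι → E) {i j : ι} (hij : i ⋖ j) :
    gramSchmidt 𝕜 (f ∘ Equiv.swap i j) i =
      gramSchmidt 𝕜 f j + (𝕜 ∙ gramSchmidt 𝕜 f i).starProjection (f j) := by
  have hIio : Iio j = insert i (Iio i) := by
    rw [Iio_insert, ← coe_inj, coe_Iio, coe_Iic, hij.Iio_eq]
  rw [gramSchmidt_def, gramSchmidt_def 𝕜 f j, hIio, sum_insert notMem_Iio_self,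
    sum_congr rfl fun l hl => by
      rw [gramSchmidt_comp_swap_of_lt f (mem_Iio.1 hl) ((mem_Iio.1 hl).trans hij.lt)]]
  simp only [Function.comp_apply, Equiv.swap_apply_left]
  abel

end GramSchmidt

section Gram

variable {E : Type*} [NormedAddCommGroup E] [InnerProductSpace ℝ E]

theorem norm_sq_gramSchmidt_comp_swap_of_covBy {ι : Type*} [LinearOrder ι]
    [LocallyFiniteOrderBot ι] [WellFoundedLT ι] [DecidableEq ι] (f : ι → E) {i j : ι}
    (hij : i ⋖ j) :
    ‖gramSchmidt ℝ (f ∘ Equiv.swap i j) i‖ ^ 2 = ‖gramSchmidt ℝ f j‖ ^ 2 +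
      (⟪f j, gramSchmidt ℝ f i⟫ / ⟪gramSchmidt ℝ f i, gramSchmidt ℝ f i⟫) ^ 2 *
        ‖gramSchmidt ℝ f i‖ ^ 2 := by
  have horth : ⟪gramSchmidt ℝ f j, gramSchmidt ℝ f i⟫ = 0 :=
    gramSchmidt_orthogonal ℝ f hij.lt.ne'
  rw [gramSchmidt_comp_swap_of_covBy f hij, Submodule.starProjection_singleton,
    RCLike.ofReal_real_eq_id, id_eq, norm_add_sq_real, real_inner_smul_right, horth, norm_smul,
    Real.norm_eq_abs, mul_pow, sq_abs, real_inner_self_eq_norm_sq, real_inner_comm]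
  ring

theorem gram_eq_transpose_mul_gram_mul {ι κ : Type*} [Fintype ι] (w : ι → E)
    (R : Matrix ι κ ℝ) (v : κ → E) (hv : ∀ c, v c = ∑ l, R l c • w l) :
    gram ℝ v = Rᵀ * gram ℝ w * R := by
  ext a c
  simp only [gram_apply, hv, sum_inner, inner_sum, real_inner_smul_left, real_inner_smul_right,
    mul_apply, transpose_apply, sum_mul]
  exact sum_congr rfl fun _ _ => sum_congr rfl fun _ _ => by rw [real_inner_comm]; ring

theorem gram_gramSchmidt {ι : Type*} [LinearOrder ι] [LocallyFiniteOrderBot ι]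
    [WellFoundedLT ι] [DecidableEq ι] (v : ι → E) :
    gram ℝ (gramSchmidt ℝ v) = diagonal fun j => ‖gramSchmidt ℝ v j‖ ^ 2 := by
  ext j l
  rcases eq_or_ne j l with rfl | hjl
  · simp [gram_apply]
  · simp [gram_apply, gramSchmidt_orthogonal ℝ v hjl, hjl]

theorem det_gram_eq_prod_norm_sq_gramSchmidt {ι : Type*} [Fintype ι] [LinearOrder ι]
    [LocallyFiniteOrderBot ι] [WellFoundedLT ι] (v : ι → E) :
    (gram ℝ v).det = ∏ j, ‖gramSchmidt ℝ v j‖ ^ 2 := by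
  classical
  set N : Matrix ι ι ℝ := of fun l c =>
    if l < c then ⟪gramSchmidt ℝ v l, v c⟫ / ‖gramSchmidt ℝ v l‖ ^ 2 else 0
  have hv : ∀ c, v c = ∑ l, (1 + N) l c • gramSchmidt ℝ v l := by
    intro c
    simp only [Matrix.add_apply, one_apply, add_smul, ite_smul, one_smul, zero_smul,
      sum_add_distrib, sum_ite_eq', mem_univ, if_true, N, of_apply]
    rw [← sum_filter, filter_gt_eq_Iio]
    exact gramSchmidt_def'' ℝ v c
  have hdet : (1 + N).det = 1 := by
    rw [det_of_isUpperTriangular fun l c (h : c < l) => by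
      simp [N, one_apply_ne h.ne', h.not_gt]]
    simp [N]
  rw [gram_eq_transpose_mul_gram_mul _ _ v hv, det_mul, det_mul, det_transpose, hdet,
    gram_gramSchmidt, det_diagonal, one_mul, mul_one]

theorem det_gram_comp_equiv {ι : Type*} [Fintype ι] [DecidableEq ι] (v : ι → E)
    (σ : ι ≃ ι) : (gram ℝ (v ∘ σ)).det = (gram ℝ v).det :=
  det_submatrix_equiv_self σ (gram ℝ v)

end Gram

section InitialSegment

variable {E : Type*} [NormedAddCommGroup E] [InnerProductSpace ℝ E] {n : ℕ}

theorem det_gram_comp_castLE (f : Fin n → E) (j : Fin n) :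
    (gram ℝ (f ∘ Fin.castLE j.isLt)).det = ∏ l ∈ Iic j, ‖gramSchmidt ℝ f l‖ ^ 2 := by
  have hIic : (univ : Finset (Fin (j + 1))).map (Fin.castLEEmb j.isLt) = Iic j := by
    refine Finset.ext fun l => ⟨fun hl => ?_, fun hl => mem_map.2 ?_⟩
    · obtain ⟨x, -, rfl⟩ := mem_map.1 hl
      exact Finset.mem_Iic.2 (Fin.le_def.2 (Nat.le_of_lt_succ x.isLt))
    · exact ⟨⟨l, Nat.lt_succ_of_le (Fin.le_def.1 (Finset.mem_Iic.1 hl))⟩, mem_univ _, rfl⟩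
  simp only [det_gram_eq_prod_norm_sq_gramSchmidt, gramSchmidt_comp_castLE, ← hIic, prod_map]
  rfl

theorem det_gram_comp_swap_comp_castLE (f : Fin n → E) {a c : Fin n} (j : Fin n)
    (h : a ≤ j ↔ c ≤ j) :
    (gram ℝ ((f ∘ Equiv.swap a c) ∘ Fin.castLE j.isLt)).det =
      (gram ℝ (f ∘ Fin.castLE j.isLt)).det := by
  by_cases ha : a ≤ j
  · let a' : Fin (j + 1) := ⟨a, Nat.lt_succ_of_le ha⟩
    let c' : Fin (j + 1) := ⟨c, Nat.lt_succ_of_le (h.1 ha)⟩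
    have hcomm : (f ∘ Equiv.swap a c) ∘ Fin.castLE j.isLt =
        (f ∘ Fin.castLE j.isLt) ∘ Equiv.swap a' c' :=
      funext fun x => congrArg f ((Fin.castLE_injective j.isLt).swap_apply a' c' x)
    rw [hcomm, det_gram_comp_equiv]
  · have hc : ¬c ≤ j := mt h.2 ha
    congr 2
    funext x
    have hx : Fin.castLE j.isLt x ≤ j := Fin.le_def.2 (Nat.le_of_lt_succ x.isLt)
    exact congrArg f (Equiv.swap_apply_of_ne_of_ne (fun h => ha (h ▸ hx)) fun h => hc (h ▸ hx))

theorem det_gram_comp_swap_comp_castLE_mul (f : Fin n → E) {i j : Fin n} (hij : i ⋖ j) :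
    (gram ℝ ((f ∘ Equiv.swap i j) ∘ Fin.castLE i.isLt)).det * ‖gramSchmidt ℝ f i‖ ^ 2 =
      (gram ℝ (f ∘ Fin.castLE i.isLt)).det * ‖gramSchmidt ℝ (f ∘ Equiv.swap i j) i‖ ^ 2 := by
  rw [det_gram_comp_castLE, det_gram_comp_castLE, ← Iio_insert, prod_insert notMem_Iio_self,
    prod_insert notMem_Iio_self, prod_congr rfl fun l hl => by
      rw [gramSchmidt_comp_swap_of_lt f (mem_Iio.1 hl) ((mem_Iio.1 hl).trans hij.lt)]]
  ring

end InitialSegment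

theorem S_eq_prod_det_gram (k n : ℕ) (b : Fin n → EuclideanSpace ℝ (Fin k)) :
    S k n b = ∏ j : Fin n, (gram ℝ (b ∘ Fin.castLE j.isLt)).det := by
  refine prod_congr rfl fun j _ => congrArg det ?_
  ext l l'
  simp [seg, gram_apply, mul_apply, PiLp.inner_apply, mul_comm]

theorem prod_lt_mul_prod_of_eq_of_ne {ι R : Type*} [CommRing R] [LinearOrder R]
    [IsStrictOrderedRing R] [Fintype ι] [DecidableEq ι] {f g : ι → R} {δ : R} (i : ι)
    (hlt : f i < δ * g i) (heq : ∀ j ≠ i, f j = g j) (hpos : ∀ j ≠ i, 0 < g j) :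
    ∏ j, f j < δ * ∏ j, g j := by
  rw [← mul_prod_erase univ f (mem_univ i), ← mul_prod_erase univ g (mem_univ i),
    prod_congr rfl fun j hj => heq j (ne_of_mem_erase hj), ← mul_assoc]
  exact mul_lt_mul_of_pos_right hlt (prod_pos fun j hj => hpos j (ne_of_mem_erase hj))

theorem stmt9 (k n : ℕ) (b : Fin n → EuclideanSpace ℝ (Fin k))
    (hb : LinearIndependent ℝ b) (δ : ℝ)
    (i : ℕ) (hi : i + 1 < n)
    (gs : Fin n → EuclideanSpace ℝ (Fin k)) (hgs : gs = InnerProductSpace.gramSchmidt ℝ b)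
    (μ : ℝ)
    (hμ : μ = ⟪b ⟨i + 1, hi⟩, gs ⟨i, Nat.lt_of_succ_lt hi⟩⟫ /
      ⟪gs ⟨i, Nat.lt_of_succ_lt hi⟩, gs ⟨i, Nat.lt_of_succ_lt hi⟩⟫)
    (hcond : (δ - μ ^ 2) * ‖gs ⟨i, Nat.lt_of_succ_lt hi⟩‖ ^ 2 > ‖gs ⟨i + 1, hi⟩‖ ^ 2)
    (b' : Fin n → EuclideanSpace ℝ (Fin k))
    (hb' : b' = b ∘ Equiv.swap ⟨i, Nat.lt_of_succ_lt hi⟩ ⟨i + 1, hi⟩) :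
    S k n b' < δ * S k n b := by
  subst hgs hb'
  set i₀ : Fin n := ⟨i, Nat.lt_of_succ_lt hi⟩
  set i₁ : Fin n := ⟨i + 1, hi⟩
  have hcov : i₀ ⋖ i₁ :=
    ⟨Fin.lt_def.2 i.lt_succ_self, fun c h₀ h₁ => by
      simp only [Fin.lt_def, i₀, i₁] at h₀ h₁; omega⟩
  have hpos : ∀ j : Fin n, 0 < (gram ℝ (b ∘ Fin.castLE j.isLt)).det := fun j => by
    rw [det_gram_comp_castLE]
    exact prod_pos fun l _ => pow_pos (norm_pos_iff.2 (gramSchmidt_ne_zero l hb)) 2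
  have hnorm : 0 < ‖gramSchmidt ℝ b i₀‖ ^ 2 :=
    pow_pos (norm_pos_iff.2 (gramSchmidt_ne_zero i₀ hb)) 2
  have hswap := det_gram_comp_swap_comp_castLE_mul b hcov
  rw [norm_sq_gramSchmidt_comp_swap_of_covBy b hcov, ← hμ] at hswap
  rw [S_eq_prod_det_gram, S_eq_prod_det_gram]
  refine prod_lt_mul_prod_of_eq_of_ne i₀ ?_ (fun j hj => det_gram_comp_swap_comp_castLE b j ?_)
    fun j _ => hpos j
  · nlinarith [hpos i₀]
  · simp only [ne_eq, Fin.ext_iff, Fin.le_def, i₀, i₁] at hj ⊢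
    omega
end
end

section
/- Let δ ∈ (1/4, 1) and let b₁,…,bₙ be a δ-LLL reduced basis of a lattice Λ in ℝ^k. Then for every nonzero v ∈ Λ, (δ − 1/4)^{(n−1)/2}·‖b₁‖ ≤ ‖v‖. -/
/-!
Size reduction gives `μᵢ₊₁,ᵢ² ≤ 1/4`, so the Lovász condition yields
`(δ - 1/4) ‖bᵢ*‖² ≤ ‖bᵢ₊₁*‖²` and hence `(δ - 1/4)ⁱ ‖b₁‖² ≤ ‖bᵢ*‖²`. If `v = ∑ zⱼ bⱼ ≠ 0` and `i`
is the largest index with `zᵢ ≠ 0`, then `⟪bᵢ*, v⟫ = zᵢ ‖bᵢ*‖²`, and Cauchy–Schwarz with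
`|zᵢ| ≥ 1` gives `‖bᵢ*‖ ≤ ‖v‖`.
-/

open Finset RealInnerProductSpace

noncomputable section

open InnerProductSpace

theorem geom_le_fin {n : ℕ} {u : Fin n → ℝ} {c : ℝ} (hc : 0 ≤ c)
    (h : ∀ (k : ℕ) (hk : k + 1 < n), c * u ⟨k, k.lt_succ_self.trans hk⟩ ≤ u ⟨k + 1, hk⟩)
    (i : Fin n) : c ^ (i : ℕ) * u ⟨0, i.pos⟩ ≤ u i := by
  let u' : ℕ → ℝ := fun m ↦ if hm : m < n then u ⟨m, hm⟩ else 0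
  have hu' : ∀ (m : ℕ) (hm : m < n), u' m = u ⟨m, hm⟩ := fun m hm ↦ dif_pos hm
  have := geom_le (u := u') hc i fun k hk ↦ by
    rw [hu' k (hk.trans i.isLt), hu' (k + 1) (Nat.lt_of_le_of_lt hk i.isLt)]
    exact h k (Nat.lt_of_le_of_lt hk i.isLt)
  rwa [hu' 0 i.pos, hu' i i.isLt] at this

theorem sub_quarter_mul_le_of_abs_le_half {δ μ a b : ℝ} (hμ : |μ| ≤ 1/2)
    (h : (δ - μ ^ 2) * a ≤ b) (ha : 0 ≤ a) : (δ - 1/4) * a ≤ b := by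
  have hμsq : μ ^ 2 ≤ 1/4 := by nlinarith [sq_abs μ, abs_nonneg μ]
  nlinarith

theorem rpow_mul_le_of_pow_mul_sq_le {c a b : ℝ} {i n : ℕ} (hc₀ : 0 < c) (hc₁ : c ≤ 1)
    (hin : i < n) (ha : 0 ≤ a) (hb : 0 ≤ b) (h : c ^ i * a ^ 2 ≤ b ^ 2) :
    c ^ (((n : ℝ) - 1) / 2) * a ≤ b := by
  have hexp : (i : ℝ) / 2 ≤ ((n : ℝ) - 1) / 2 := by
    have : (i : ℝ) + 1 ≤ n := by exact_mod_cast hin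
    linarith
  have hsqrt : c ^ ((i : ℝ) / 2) = √(c ^ i) := by
    rw [Real.sqrt_eq_rpow, ← Real.rpow_natCast, ← Real.rpow_mul hc₀.le, mul_one_div]
  calc c ^ (((n : ℝ) - 1) / 2) * a
      ≤ c ^ ((i : ℝ) / 2) * a :=
        mul_le_mul_of_nonneg_right (Real.rpow_le_rpow_of_exponent_ge hc₀ hc₁ hexp) ha
    _ = √(c ^ i * a ^ 2) := by
        rw [hsqrt, Real.sqrt_mul (pow_nonneg hc₀.le i), Real.sqrt_sq ha]
    _ ≤ √(b ^ 2) := Real.sqrt_le_sqrt h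
    _ = b := Real.sqrt_sq hb

section GramSchmidt

variable {E ι : Type*} [NormedAddCommGroup E] [InnerProductSpace ℝ E]
  [LinearOrder ι] [LocallyFiniteOrderBot ι] [WellFoundedLT ι] (b : ι → E)

theorem gramSchmidt_of_isMin {i : ι} (hi : IsMin i) : gramSchmidt ℝ b i = b i := by
  rw [gramSchmidt_def, Finset.Iio_eq_empty.mpr hi, sum_empty, sub_zero]

theorem inner_gramSchmidt_apply_self (i : ι) :
    ⟪gramSchmidt ℝ b i, b i⟫ = ‖gramSchmidt ℝ b i‖ ^ 2 := by
  conv_lhs => rw [gramSchmidt_def'' ℝ b i]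
  rw [inner_add_right, inner_sum, real_inner_self_eq_norm_sq, add_eq_left]
  refine sum_eq_zero fun j hj ↦ ?_
  rw [real_inner_smul_right, gramSchmidt_orthogonal ℝ b (mem_Iio.mp hj).ne', mul_zero]

variable [Fintype ι]

theorem inner_gramSchmidt_sum_smul_of_forall_gt_eq_zero {i : ι} (c : ι → ℝ)
    (hc : ∀ j, i < j → c j = 0) :
    ⟪gramSchmidt ℝ b i, ∑ j, c j • b j⟫ = c i * ‖gramSchmidt ℝ b i‖ ^ 2 := by
  rw [inner_sum, sum_eq_single i]
  · rw [real_inner_smul_right, inner_gramSchmidt_apply_self]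
  · intro j _ hji
    rcases hji.lt_or_gt with hj | hj
    · rw [real_inner_smul_right, gramSchmidt_inv_triangular ℝ b hj, mul_zero]
    · rw [hc j hj, zero_smul, inner_zero_right]
  · exact fun hi ↦ absurd (mem_univ i) hi

theorem norm_gramSchmidt_le_norm_sum_intCast_smul {i : ι} (z : ι → ℤ) (hzi : z i ≠ 0)
    (hz : ∀ j, i < j → z j = 0) :
    ‖gramSchmidt ℝ b i‖ ≤ ‖∑ j, (z j : ℝ) • b j‖ := by
  set g := gramSchmidt ℝ b i
  set v := ∑ j, (z j : ℝ) • b j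
  have hinner : ⟪g, v⟫ = z i * ‖g‖ ^ 2 :=
    inner_gramSchmidt_sum_smul_of_forall_gt_eq_zero b _ fun j hj ↦ by simp [hz j hj]
  have hz1 : (1 : ℝ) ≤ |(z i : ℝ)| := by exact_mod_cast Int.one_le_abs hzi
  have hsq : ‖g‖ * ‖g‖ ≤ ‖g‖ * ‖v‖ :=
    calc ‖g‖ * ‖g‖ ≤ |(z i : ℝ)| * ‖g‖ ^ 2 := by nlinarith [sq_nonneg ‖g‖]
      _ = |⟪g, v⟫| := by rw [hinner, abs_mul, abs_of_nonneg (sq_nonneg ‖g‖)]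
      _ ≤ ‖g‖ * ‖v‖ := abs_real_inner_le_norm g v
  rcases (norm_nonneg g).eq_or_lt with hg | hg
  · exact hg ▸ norm_nonneg v
  · exact le_of_mul_le_mul_left hsq hg

theorem exists_norm_gramSchmidt_le_norm_sum_intCast_smul (z : ι → ℤ)
    (hv : ∑ j, (z j : ℝ) • b j ≠ 0) :
    ∃ i, ‖gramSchmidt ℝ b i‖ ≤ ‖∑ j, (z j : ℝ) • b j‖ := by
  classical
  have hsupp : (univ.filter fun j ↦ z j ≠ 0).Nonempty := by
    by_contra! hempty
    refine hv (sum_eq_zero fun j _ ↦ ?_)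
    have : z j = 0 := by simpa using filter_eq_empty_iff.mp hempty (mem_univ j)
    simp [this]
  obtain ⟨i, hi, hmax⟩ := exists_max_image _ id hsupp
  refine ⟨i, norm_gramSchmidt_le_norm_sum_intCast_smul b z (mem_filter.mp hi).2 fun j hij ↦ ?_⟩
  by_contra hj
  exact (hmax j (mem_filter.mpr ⟨mem_univ j, hj⟩)).not_gt hij

end GramSchmidt

theorem stmt15_general (k n : ℕ) (b : Fin n → EuclideanSpace ℝ (Fin k))
    (δ : ℝ) (hδ : δ ∈ Set.Ioo (1/4 : ℝ) 1)
    (gs : Fin n → EuclideanSpace ℝ (Fin k)) (hgs : gs = InnerProductSpace.gramSchmidt ℝ b)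
    (μ : Fin n → Fin n → ℝ)
    (hred1 : ∀ i j : Fin n, j < i → |μ i j| ≤ 1/2)
    (hred2 : ∀ (i : ℕ) (hi : i + 1 < n),
      (δ - μ ⟨i + 1, hi⟩ ⟨i, Nat.lt_of_succ_lt hi⟩ ^ 2) *
          ‖gs ⟨i, Nat.lt_of_succ_lt hi⟩‖ ^ 2 ≤ ‖gs ⟨i + 1, hi⟩‖ ^ 2)
    (hn : 0 < n)
    (v : EuclideanSpace ℝ (Fin k)) (hv : v ≠ 0)
    (z : Fin n → ℤ) (hvz : v = ∑ i : Fin n, (z i : ℝ) • b i) :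
    (δ - 1/4) ^ (((n : ℝ) - 1) / 2) * ‖b ⟨0, hn⟩‖ ≤ ‖v‖ := by
  subst hvz
  obtain ⟨i, hi⟩ := exists_norm_gramSchmidt_le_norm_sum_intCast_smul b z hv
  have hlovasz : ∀ (m : ℕ) (hm : m + 1 < n),
      (δ - 1/4) * ‖gs ⟨m, Nat.lt_of_succ_lt hm⟩‖ ^ 2 ≤ ‖gs ⟨m + 1, hm⟩‖ ^ 2 := fun m hm ↦
    sub_quarter_mul_le_of_abs_le_half (hred1 _ _ (Fin.mk_lt_mk.mpr m.lt_succ_self))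
      (hred2 m hm) (sq_nonneg _)
  have hdecay := geom_le_fin (u := fun j ↦ ‖gs j‖ ^ 2) (by linarith [hδ.1]) hlovasz i
  have hgs0 : gs ⟨0, hn⟩ = b ⟨0, hn⟩ := by
    rw [hgs, gramSchmidt_of_isMin b fun j _ ↦ Nat.zero_le j]
  calc (δ - 1/4) ^ (((n : ℝ) - 1) / 2) * ‖b ⟨0, hn⟩‖ ≤ ‖gs i‖ :=
        rpow_mul_le_of_pow_mul_sq_le (by linarith [hδ.1]) (by linarith [hδ.2]) i.isLt
          (norm_nonneg _) (norm_nonneg _) (hgs0 ▸ hdecay)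
    _ ≤ ‖∑ j, (z j : ℝ) • b j‖ := hgs ▸ hi

theorem stmt15 (k n : ℕ) (b : Fin n → EuclideanSpace ℝ (Fin k))
    (hb : LinearIndependent ℝ b)
    (δ : ℝ) (hδ : δ ∈ Set.Ioo (1/4 : ℝ) 1)
    (gs : Fin n → EuclideanSpace ℝ (Fin k)) (hgs : gs = InnerProductSpace.gramSchmidt ℝ b)
    (μ : Fin n → Fin n → ℝ)
    (hμ : ∀ i j, μ i j = ⟪b i, gs j⟫ / ⟪gs j, gs j⟫)
    (hred1 : ∀ i j : Fin n, j < i → |μ i j| ≤ 1/2)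
    (hred2 : ∀ (i : ℕ) (hi : i + 1 < n),
      (δ - μ ⟨i + 1, hi⟩ ⟨i, Nat.lt_of_succ_lt hi⟩ ^ 2) *
          ‖gs ⟨i, Nat.lt_of_succ_lt hi⟩‖ ^ 2 ≤ ‖gs ⟨i + 1, hi⟩‖ ^ 2)
    (hn : 0 < n)
    (v : EuclideanSpace ℝ (Fin k)) (hv : v ≠ 0)
    (z : Fin n → ℤ) (hvz : v = ∑ i : Fin n, (z i : ℝ) • b i) :
    (δ - 1/4) ^ (((n : ℝ) - 1) / 2) * ‖b ⟨0, hn⟩‖ ≤ ‖v‖ :=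
  stmt15_general k n b δ hδ gs hgs μ hred1 hred2 hn v hv z hvz
end
end

section
/- Let δ ∈ (1/4, 1) and let b₁,…,bₙ be a δ-LLL reduced basis with Gram–Schmidt vectors b₁*,…,bₙ*. Then for every i ≤ n, ‖b₁‖² ≤ ‖bᵢ*‖² / (δ − 1/4)^{i−1}. -/
/-!
The Lovász condition together with size reduction `|μ_{i+1,i}| ≤ 1/2` gives
`(δ - 1/4) ‖bᵢ*‖² ≤ ‖b_{i+1}*‖²`, so the squared Gram–Schmidt norms grow at least geometrically
with ratio `δ - 1/4` starting from `‖b₁*‖² = ‖b₁‖²`.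
-/

open Finset RealInnerProductSpace

noncomputable section

theorem InnerProductSpace.gramSchmidt_of_isMin {𝕜 E ι : Type*} [RCLike 𝕜] [NormedAddCommGroup E]
    [InnerProductSpace 𝕜 E] [LinearOrder ι] [LocallyFiniteOrderBot ι] [WellFoundedLT ι]
    (f : ι → E) {i : ι} (hi : IsMin i) : gramSchmidt 𝕜 f i = f i := by
  rw [gramSchmidt_def, Finset.Iio_eq_empty.mpr hi, Finset.sum_empty, sub_zero]

theorem Fin.pow_mul_le_of_mul_le_succ {R : Type*} [Semiring R] [PartialOrder R]
    [IsOrderedRing R] {n : ℕ} {c : R} (hc : 0 ≤ c) (a : Fin n → R)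
    (h : ∀ (i : ℕ) (hi : i + 1 < n), c * a ⟨i, Nat.lt_of_succ_lt hi⟩ ≤ a ⟨i + 1, hi⟩) :
    ∀ (m : ℕ) (hm : m < n), c ^ m * a ⟨0, Nat.zero_lt_of_lt hm⟩ ≤ a ⟨m, hm⟩ := by
  intro m
  induction m with
  | zero => intro hm; simp
  | succ m ih =>
    intro hm
    calc c ^ (m + 1) * a ⟨0, Nat.zero_lt_of_lt hm⟩
        = c * (c ^ m * a ⟨0, Nat.zero_lt_of_lt hm⟩) := by rw [pow_succ', mul_assoc]
      _ ≤ c * a ⟨m, Nat.lt_of_succ_lt hm⟩ := mul_le_mul_of_nonneg_left (ih _) hc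
      _ ≤ a ⟨m + 1, hm⟩ := h m hm

theorem sub_quarter_mul_le_of_sub_sq_mul_le {δ μ x y : ℝ} (hμ : |μ| ≤ 1 / 2) (hx : 0 ≤ x)
    (h : (δ - μ ^ 2) * x ≤ y) : (δ - 1 / 4) * x ≤ y := by
  have hμ2 : μ ^ 2 ≤ 1 / 4 := by
    nlinarith [sq_abs μ, abs_nonneg μ]
  nlinarith

theorem stmt16_general (k n : ℕ) (b : Fin n → EuclideanSpace ℝ (Fin k))
    (δ : ℝ) (hδ : δ ∈ Set.Ioo (1/4 : ℝ) 1)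
    (gs : Fin n → EuclideanSpace ℝ (Fin k)) (hgs : gs = InnerProductSpace.gramSchmidt ℝ b)
    (μ : Fin n → Fin n → ℝ)
    (hred1 : ∀ i j : Fin n, j < i → |μ i j| ≤ 1/2)
    (hred2 : ∀ (i : ℕ) (hi : i + 1 < n),
      (δ - μ ⟨i + 1, hi⟩ ⟨i, Nat.lt_of_succ_lt hi⟩ ^ 2) *
          ‖gs ⟨i, Nat.lt_of_succ_lt hi⟩‖ ^ 2 ≤ ‖gs ⟨i + 1, hi⟩‖ ^ 2) :
    ∀ i : Fin n,
      ‖b ⟨0, Nat.lt_of_le_of_lt (Nat.zero_le i.val) i.isLt⟩‖ ^ 2 ≤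
        ‖gs i‖ ^ 2 / (δ - 1/4) ^ (i : ℕ) := by
  intro i
  have hc : 0 < δ - 1 / 4 := sub_pos.mpr hδ.1
  have hb₀ : b ⟨0, i.pos⟩ = gs ⟨0, i.pos⟩ := by
    rw [hgs, InnerProductSpace.gramSchmidt_of_isMin b fun j _ => Nat.zero_le j.val]
  have hstep : ∀ (j : ℕ) (hj : j + 1 < n), (δ - 1 / 4) * ‖gs ⟨j, Nat.lt_of_succ_lt hj⟩‖ ^ 2 ≤
      ‖gs ⟨j + 1, hj⟩‖ ^ 2 := fun j hj =>
    sub_quarter_mul_le_of_sub_sq_mul_le (hred1 _ _ (Nat.lt_succ_self j)) (sq_nonneg _)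
      (hred2 j hj)
  rw [le_div_iff₀ (pow_pos hc _), hb₀, mul_comm]
  exact Fin.pow_mul_le_of_mul_le_succ hc.le (fun j => ‖gs j‖ ^ 2) hstep i i.isLt

theorem stmt16 (k n : ℕ) (b : Fin n → EuclideanSpace ℝ (Fin k))
    (hb : LinearIndependent ℝ b)
    (δ : ℝ) (hδ : δ ∈ Set.Ioo (1/4 : ℝ) 1)
    (gs : Fin n → EuclideanSpace ℝ (Fin k)) (hgs : gs = InnerProductSpace.gramSchmidt ℝ b)
    (μ : Fin n → Fin n → ℝ)
    (hμ : ∀ i j, μ i j = ⟪b i, gs j⟫ / ⟪gs j, gs j⟫)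
    (hred1 : ∀ i j : Fin n, j < i → |μ i j| ≤ 1/2)
    (hred2 : ∀ (i : ℕ) (hi : i + 1 < n),
      (δ - μ ⟨i + 1, hi⟩ ⟨i, Nat.lt_of_succ_lt hi⟩ ^ 2) *
          ‖gs ⟨i, Nat.lt_of_succ_lt hi⟩‖ ^ 2 ≤ ‖gs ⟨i + 1, hi⟩‖ ^ 2) :
    ∀ i : Fin n,
      ‖b ⟨0, Nat.lt_of_le_of_lt (Nat.zero_le i.val) i.isLt⟩‖ ^ 2 ≤
        ‖gs i‖ ^ 2 / (δ - 1/4) ^ (i : ℕ) :=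
  stmt16_general k n b δ hδ gs hgs μ hred1 hred2
end
end
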